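/- For every ε > 0 there exists m₀ such that the following holds for every integer m ≥ m₀ and every real R > 0. Let τ ∈ (0, R] satisfy: m·tanh²(τ/2) = 50·tanh²(2R)·(ln m + ln(ln(sinh(2R)/sinh τ))) in case R < m, and cosh²(τ/2) = m·ln(cosh(2R)) in case R ≥ m. Define Δ := m⁻⁴ · (∫₀^{2R} sinh^{m−1}(η) dη) / (∫₀^{τ} sinh^{m−1}(η) dη). Then | ln Δ − m·ln(√m·cosh(2R)) | ≤ ε·m·ln(√m·cosh(2R)). -/

import Mathlib

/-!
Write `I(a) = ∫₀^a sinh^(m-1)` and `L = log (√m cosh 2R)`. Comparing the integrand with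
`sinh^(m-1) cosh`, whose primitive is `sinh^m / m`, gives `sinh^m a / (m cosh a) ≤ I(a) ≤ sinh^m a / m`,
so `log Δ` equals `m log (sinh 2R / sinh τ)` up to an error `4 log m + log cosh 2R ≤ 8 L`.
It remains to see that `log (sinh 2R / sinh τ) = L + O(log L)`, i.e. that the ratio
`√m cosh 2R sinh τ / sinh 2R` lies between `1` and a power of `L`. The equation defining `τ`
makes this ratio explicit: for `R < m` its square is `200 W cosh⁴(τ/2)` with
`W = log m + log log (sinh 2R / sinh τ) ≤ 3 L` and `cosh²(τ/2) ≤ 2`, while for `R ≥ m` it is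
about `√m · sinh τ`, with `sinh τ ≈ cosh τ = 2 m log cosh 2R - 1 ≈ 4 m R`.
-/

open Real Filter intervalIntegral

lemma integral_sinh_pow_mul_cosh (n : ℕ) (a : ℝ) :
    ∫ x in (0:ℝ)..a, sinh x ^ n * cosh x = sinh a ^ (n + 1) / (n + 1) := by
  have hderiv : ∀ x ∈ Set.uIcc (0:ℝ) a,
      HasDerivAt (fun y => sinh y ^ (n + 1) / (n + 1)) (sinh x ^ n * cosh x) x := by
    intro x _
    refine (((hasDerivAt_sinh x).fun_pow (n + 1)).div_const ((n : ℝ) + 1)).congr_deriv ?_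
    push_cast
    field_simp
  rw [integral_eq_sub_of_hasDerivAt hderiv (by apply Continuous.intervalIntegrable; fun_prop)]
  simp

lemma integral_sinh_pow_le (n : ℕ) {a : ℝ} (ha : 0 ≤ a) :
    ∫ x in (0:ℝ)..a, sinh x ^ n ≤ sinh a ^ (n + 1) / (n + 1) := by
  rw [← integral_sinh_pow_mul_cosh]
  refine integral_mono_on ha (by apply Continuous.intervalIntegrable; fun_prop)
    (by apply Continuous.intervalIntegrable; fun_prop) fun x hx => ?_
  exact le_mul_of_one_le_right (pow_nonneg (sinh_nonneg_iff.2 hx.1) n) (one_le_cosh x)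

lemma sinh_pow_div_le_integral_sinh_pow (n : ℕ) {a : ℝ} (ha : 0 ≤ a) :
    sinh a ^ (n + 1) / ((n + 1) * cosh a) ≤ ∫ x in (0:ℝ)..a, sinh x ^ n := by
  rw [← div_div, ← integral_sinh_pow_mul_cosh, ← intervalIntegral.integral_div]
  refine integral_mono_on ha (by apply Continuous.intervalIntegrable; fun_prop)
    (by apply Continuous.intervalIntegrable; fun_prop) fun x hx => ?_
  rw [div_le_iff₀ (cosh_pos a)]
  refine mul_le_mul_of_nonneg_left (cosh_le_cosh.2 ?_) (pow_nonneg (sinh_nonneg_iff.2 hx.1) n)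
  rw [abs_of_nonneg hx.1, abs_of_nonneg ha]
  exact hx.2

lemma integral_sinh_pow_pos (n : ℕ) {a : ℝ} (ha : 0 < a) :
    0 < ∫ x in (0:ℝ)..a, sinh x ^ n :=
  (sinh_pow_div_le_integral_sinh_pow n ha.le).trans_lt' <| by
    have := sinh_pos_iff.2 ha
    positivity

lemma log_mul_integral_sinh_pow_mem {m : ℕ} (hm : 1 ≤ m) {a : ℝ} (ha : 0 < a) :
    log (m * ∫ x in (0:ℝ)..a, sinh x ^ (m - 1))
      ∈ Set.Icc (m * log (sinh a) - log (cosh a)) (m * log (sinh a)) := by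
  obtain ⟨n, rfl⟩ : ∃ n, m = n + 1 := ⟨m - 1, by omega⟩
  have hs : 0 < sinh a := sinh_pos_iff.2 ha
  have hI := integral_sinh_pow_pos n ha
  have hlow := sinh_pow_div_le_integral_sinh_pow n ha.le
  have hup := integral_sinh_pow_le n ha.le
  rw [div_le_iff₀ (by positivity)] at hlow
  rw [le_div_iff₀ (by positivity)] at hup
  simp only [Nat.add_sub_cancel, Nat.cast_add, Nat.cast_one]
  constructor
  · calc ((n:ℝ) + 1) * log (sinh a) - log (cosh a) = log (sinh a ^ (n + 1) / cosh a) := by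
          rw [log_div (by positivity) (cosh_pos a).ne', log_pow]; push_cast; ring
      _ ≤ _ := log_le_log (by positivity) ((div_le_iff₀ (cosh_pos a)).2 (by linarith))
  · calc log (((n:ℝ) + 1) * ∫ x in (0:ℝ)..a, sinh x ^ n) ≤ log (sinh a ^ (n + 1)) :=
          log_le_log (by positivity) (by linarith)
      _ = _ := by rw [log_pow]; push_cast; ring

lemma abs_log_integral_ratio_sub_le {m : ℕ} (hm : 1 ≤ m) {R τ : ℝ} (hτ : 0 < τ) (hτR : τ ≤ 2 * R) :
    |log ((m : ℝ)⁻¹ ^ 4 * ((∫ η in (0:ℝ)..(2 * R), sinh η ^ (m - 1)) /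
        (∫ η in (0:ℝ)..τ, sinh η ^ (m - 1)))) - m * log (√m * cosh (2 * R))|
      ≤ 4 * log m + log (cosh (2 * R)) +
        m * |log (sinh (2 * R) / sinh τ) - log (√m * cosh (2 * R))| := by
  have hR : 0 < 2 * R := hτ.trans_le hτR
  have hm0 : (0 : ℝ) < m := by exact_mod_cast hm
  have hlm : 0 ≤ log (m : ℝ) := log_nonneg (by exact_mod_cast hm)
  obtain ⟨hI₂l, hI₂u⟩ := log_mul_integral_sinh_pow_mem hm hR
  obtain ⟨hIτl, hIτu⟩ := log_mul_integral_sinh_pow_mem hm hτ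
  have hI₂ := integral_sinh_pow_pos (m - 1) hR
  have hIτ := integral_sinh_pow_pos (m - 1) hτ
  have hcosh : log (cosh τ) ≤ log (cosh (2 * R)) :=
    log_le_log (cosh_pos τ) (cosh_le_cosh.2 (by rwa [abs_of_pos hτ, abs_of_pos hR]))
  set d := log (sinh (2 * R) / sinh τ) - log (√m * cosh (2 * R)) with hd
  have hsplit : log ((m : ℝ)⁻¹ ^ 4 * ((∫ η in (0:ℝ)..(2 * R), sinh η ^ (m - 1)) /
        (∫ η in (0:ℝ)..τ, sinh η ^ (m - 1)))) - m * log (√m * cosh (2 * R)) =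
      (log (m * ∫ η in (0:ℝ)..(2 * R), sinh η ^ (m - 1)) - m * log (sinh (2 * R))) -
        (log (m * ∫ η in (0:ℝ)..τ, sinh η ^ (m - 1)) - m * log (sinh τ)) - 4 * log m + m * d := by
    rw [hd, log_mul (by positivity) (by positivity), log_div hI₂.ne' hIτ.ne', log_pow, log_inv,
      log_mul hm0.ne' hI₂.ne', log_mul hm0.ne' hIτ.ne',
      log_div (sinh_pos_iff.2 hR).ne' (sinh_pos_iff.2 hτ).ne']
    push_cast
    ring
  have hd_le := mul_le_mul_of_nonneg_left (le_abs_self d) hm0.le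
  have hd_ge := mul_le_mul_of_nonneg_left (neg_abs_le d) hm0.le
  rw [hsplit, abs_le]
  constructor <;> linarith

lemma log_cosh_le {x : ℝ} (hx : 0 ≤ x) : log (cosh x) ≤ x := by
  rw [log_le_iff_le_exp (cosh_pos x)]
  linarith [exp_sub_cosh x, sinh_nonneg_iff.2 hx]

lemma sub_log_two_le_log_cosh (x : ℝ) : x - log 2 ≤ log (cosh x) :=
  calc x - log 2 = log (exp x / 2) := by rw [log_div (exp_pos x).ne' two_ne_zero, log_exp]
    _ ≤ log (cosh x) := log_le_log (by positivity) (by rw [cosh_eq]; linarith [exp_pos (-x)])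

lemma log_sqrt_mul_cosh {m : ℝ} (hm : 0 < m) (x : ℝ) :
    log (√m * cosh x) = log m / 2 + log (cosh x) := by
  rw [log_mul (sqrt_pos.2 hm).ne' (cosh_pos x).ne', log_sqrt hm.le]

lemma two_mul_sinh_le_sinh_two_mul {x y : ℝ} (hx : 0 ≤ x) (hxy : x ≤ y) :
    2 * sinh x ≤ sinh (2 * y) := by
  rw [sinh_two_mul]
  have hy : 0 ≤ sinh y := sinh_nonneg_iff.2 (hx.trans hxy)
  nlinarith [sinh_le_sinh.2 hxy, one_le_cosh y]

lemma cosh_sq_mul_one_sub_tanh_sq (x : ℝ) : cosh x ^ 2 * (1 - tanh x ^ 2) = 1 := by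
  rw [tanh_eq_sinh_div_cosh]
  field_simp
  linarith [cosh_sq x]

lemma half_le_log_sinh_two_mul_div_sinh {R τ : ℝ} (hτ : 0 < τ) (hτR : τ ≤ R) :
    1 / 2 ≤ log (sinh (2 * R) / sinh τ) :=
  calc (1 / 2 : ℝ) ≤ log 2 := by linarith [log_two_gt_d9]
    _ ≤ _ := log_le_log two_pos
      ((le_div_iff₀ (sinh_pos_iff.2 hτ)).2 (two_mul_sinh_le_sinh_two_mul hτ.le hτR))

noncomputable def gapRatio (m R τ : ℝ) : ℝ := √m * cosh (2 * R) * sinh τ / sinh (2 * R)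

lemma log_gapRatio {m R τ : ℝ} (hm : 0 < m) (hR : 0 < R) (hτ : 0 < τ) :
    log (gapRatio m R τ) = log (√m * cosh (2 * R)) - log (sinh (2 * R) / sinh τ) := by
  have := sinh_pos_iff.2 hτ
  have := sinh_pos_iff.2 (show 0 < 2 * R by linarith)
  rw [gapRatio, ← div_div_eq_mul_div, log_div (by positivity) (by positivity)]

lemma sq_gapRatio_of_tanh_eq {m R τ w : ℝ} (hm : 0 ≤ m) (hR : R ≠ 0)
    (heq : m * tanh (τ / 2) ^ 2 = 50 * tanh (2 * R) ^ 2 * w) :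
    gapRatio m R τ ^ 2 = 200 * w * cosh (τ / 2) ^ 4 := by
  have hs : sinh (2 * R) ≠ 0 := sinh_ne_zero.2 (mul_ne_zero two_ne_zero hR)
  have hT : tanh (2 * R) ≠ 0 := by
    rw [tanh_eq_sinh_div_cosh]; exact div_ne_zero hs (cosh_pos _).ne'
  have hsq : gapRatio m R τ ^ 2 * tanh (2 * R) ^ 2
      = 4 * cosh (τ / 2) ^ 4 * (m * tanh (τ / 2) ^ 2) := by
    have hτ : sinh τ = 2 * sinh (τ / 2) * cosh (τ / 2) := by rw [← sinh_two_mul]; ring_nf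
    rw [gapRatio, hτ, tanh_eq_sinh_div_cosh, tanh_eq_sinh_div_cosh]
    have := cosh_pos (2 * R)
    have := cosh_pos (τ / 2)
    field_simp
    rw [sq_sqrt hm]
    ring
  rw [heq] at hsq
  exact mul_right_cancel₀ (pow_ne_zero 2 hT) (by linear_combination hsq)

lemma one_le_gapRatio_of_tanh_eq {m R τ : ℝ} (hm : 0 < m) (hlm : 2 ≤ log m) (hτ : 0 < τ)
    (hτR : τ ≤ R) (heq : m * tanh (τ / 2) ^ 2
      = 50 * tanh (2 * R) ^ 2 * (log m + log (log (sinh (2 * R) / sinh τ)))) :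
    1 ≤ gapRatio m R τ := by
  have hW : 1 ≤ log m + log (log (sinh (2 * R) / sinh τ)) := by
    have := log_le_log (by norm_num) (half_le_log_sinh_two_mul_div_sinh hτ hτR)
    rw [one_div, log_inv] at this
    linarith [log_two_lt_d9]
  have hX : 0 ≤ gapRatio m R τ := by
    have := sinh_pos_iff.2 hτ
    have := sinh_pos_iff.2 (show 0 < 2 * R by linarith)
    rw [gapRatio]
    positivity
  have hX2 := sq_gapRatio_of_tanh_eq hm.le (hτ.trans_le hτR).ne' heq
  have hc := one_le_pow₀ (n := 4) (one_le_cosh (τ / 2))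
  nlinarith

lemma gapRatio_mem_of_lt {m R τ : ℝ} (hm : 200 + 200 * log m ≤ m) (hlm : 2 ≤ log m)
    (hτ : 0 < τ) (hτR : τ ≤ R) (hRm : R < m)
    (heq : m * tanh (τ / 2) ^ 2
      = 50 * tanh (2 * R) ^ 2 * (log m + log (log (sinh (2 * R) / sinh τ)))) :
    gapRatio m R τ ∈ Set.Icc 1 (64 * log (√m * cosh (2 * R)) ^ 3) := by
  set S := log (sinh (2 * R) / sinh τ)
  set W := log m + log S
  set L := log (√m * cosh (2 * R))
  have hm0 : 0 < m := by linarith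
  have hR : 0 < R := hτ.trans_le hτR
  have hX := one_le_gapRatio_of_tanh_eq hm0 hlm hτ hτR heq
  have hL : L = log m / 2 + log (cosh (2 * R)) := log_sqrt_mul_cosh hm0 _
  have hlogC := log_cosh_le (x := 2 * R) (by linarith)
  have hlogC' := log_nonneg (one_le_cosh (2 * R))
  have hL1 : 1 ≤ L := by linarith
  have hlogS : log S ≤ log L := by
    refine log_le_log (by linarith [half_le_log_sinh_two_mul_div_sinh hτ hτR]) ?_
    linarith [log_gapRatio hm0 hR hτ, log_nonneg hX]
  have hW₂ : W ≤ 2 * log m + 2 := by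
    have h3 : log (3 * m) ≤ 2 + log m := by
      rw [log_mul (by norm_num) hm0.ne']
      linarith [log_le_sub_one_of_pos (show (0:ℝ) < 3 by norm_num)]
    have : log L ≤ log (3 * m) := log_le_log (by linarith) (by linarith [log_le_sub_one_of_pos hm0])
    linarith
  have hc : cosh (τ / 2) ^ 2 ≤ 2 := by
    -- `m tanh²(τ/2) = 50 tanh²(2R) W ≤ 50 W ≤ m / 2`
    have htanh : tanh (τ / 2) ^ 2 ≤ 1 / 2 := by nlinarith [(tanh_sq_lt_one (2 * R)).le]
    nlinarith [cosh_sq_mul_one_sub_tanh_sq (τ / 2)]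
  have hW₃ : W ≤ 3 * L := by linarith [log_le_sub_one_of_pos (by linarith : 0 < L)]
  refine ⟨hX, (pow_le_pow_iff_left₀ (by linarith) (by positivity) two_ne_zero).1 ?_⟩
  calc gapRatio m R τ ^ 2 = 200 * W * (cosh (τ / 2) ^ 2) ^ 2 := by
        rw [sq_gapRatio_of_tanh_eq hm0.le hR.ne' heq]; ring
    _ ≤ 200 * (3 * L) * 2 ^ 2 := by gcongr
    _ ≤ (64 * L ^ 3) ^ 2 := by nlinarith [one_le_pow₀ (n := 5) hL1]

lemma gapRatio_mem_of_le {m R τ : ℝ} (hm : 2 ≤ m) (hmR : m ≤ R) (hτ : 0 < τ)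
    (heq : cosh (τ / 2) ^ 2 = m * log (cosh (2 * R))) :
    gapRatio m R τ ∈ Set.Icc 1 (64 * log (√m * cosh (2 * R)) ^ 3) := by
  have hR : 0 < R := by linarith
  have hs₂ : 2 * R ≤ sinh (2 * R) := self_le_sinh_iff.2 (by linarith)
  have hC : 1 ≤ cosh (2 * R) / sinh (2 * R) := by
    rw [le_div_iff₀ (by linarith), one_mul]; exact (sinh_lt_cosh _).le
  have hC' : cosh (2 * R) / sinh (2 * R) ≤ 2 := by
    rw [div_le_iff₀ (by linarith)]
    linarith [cosh_sub_sinh (2 * R), exp_le_one_iff.2 (show -(2 * R) ≤ 0 by linarith)]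
  have hlogC := log_cosh_le (x := 2 * R) (by linarith)
  have hlogC' := sub_log_two_le_log_cosh (2 * R)
  have hcosh : cosh τ = 2 * m * log (cosh (2 * R)) - 1 := by
    have := cosh_sq (τ / 2)
    have := cosh_two_mul (τ / 2)
    rw [show 2 * (τ / 2) = τ by ring] at this
    nlinarith
  have hsinh_le : sinh τ ≤ 4 * m * R := by nlinarith [sinh_lt_cosh τ]
  have hsinh_ge : m * R ≤ sinh τ := by
    nlinarith [cosh_sub_sinh τ, exp_le_one_iff.2 (show -τ ≤ 0 by linarith), log_two_lt_d9]
  have hsm : 1 ≤ √m := one_le_sqrt.2 (by linarith)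
  have hsm' : √m ≤ m := sqrt_le_self_iff.2 (Or.inr (by linarith))
  have hL : R ≤ log (√m * cosh (2 * R)) := by
    rw [log_sqrt_mul_cosh (by linarith)]
    linarith [log_nonneg (show 1 ≤ m by linarith), log_two_lt_d9]
  rw [gapRatio, show √m * cosh (2 * R) * sinh τ / sinh (2 * R)
    = √m * (cosh (2 * R) / sinh (2 * R)) * sinh τ by ring]
  constructor
  · calc (1:ℝ) ≤ √m * 1 * (m * R) := by nlinarith
      _ ≤ _ := by gcongr
  · calc √m * (cosh (2 * R) / sinh (2 * R)) * sinh τ ≤ m * 2 * (4 * m * R) := by gcongr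
      _ ≤ 64 * R ^ 3 := by nlinarith [mul_le_mul hmR hmR (by linarith) (by linarith)]
      _ ≤ _ := by gcongr

lemma abs_log_sinh_div_sub_log_le {m R τ : ℝ} (hm : 0 < m) (hR : 0 < R) (hτ : 0 < τ)
    (h : gapRatio m R τ ∈ Set.Icc 1 (64 * log (√m * cosh (2 * R)) ^ 3)) :
    |log (sinh (2 * R) / sinh τ) - log (√m * cosh (2 * R))|
      ≤ log 64 + 3 * log (log (√m * cosh (2 * R))) := by
  obtain ⟨h₁, h₂⟩ := h
  have hL : 0 < log (√m * cosh (2 * R)) := (Odd.pow_pos_iff (n := 3) (by decide)).1 (by linarith)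
  rw [abs_sub_comm, ← log_gapRatio hm hR hτ, abs_of_nonneg (log_nonneg h₁)]
  calc _ ≤ log (64 * log (√m * cosh (2 * R)) ^ 3) := log_le_log (by linarith) h₂
    _ = _ := by rw [log_mul (by norm_num) (by positivity), log_pow]; push_cast; ring

lemma eventually_add_mul_log_le (a b : ℝ) {c : ℝ} (hc : 0 < c) :
    ∀ᶠ x in atTop, a + b * log x ≤ c * x := by
  filter_upwards [(isLittleO_log_id_atTop.const_mul_left b).bound (half_pos hc),
    eventually_ge_atTop (2 * a / c), eventually_ge_atTop 0] with x hlog ha hx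
  rw [norm_eq_abs, id, norm_eq_abs, abs_of_nonneg hx] at hlog
  rw [div_le_iff₀ hc] at ha
  linarith [le_abs_self (b * log x)]

/-- The asymptotics `ln Δ = (1 + o(1)) m ln(√m cosh 2R)`, where
`Δ = m⁻⁴ (∫₀^{2R} sinh^{m-1}) / (∫₀^τ sinh^{m-1})` and `τ ∈ (0, R]` is the root of the
defining equation (first form when `R < m`, second form when `R ≥ m`). -/
theorem stmt_11 :
    ∀ ε : ℝ, 0 < ε → ∃ m₀ : ℕ, ∀ m : ℕ, m₀ ≤ m → ∀ R : ℝ, 0 < R →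
      ∀ τ : ℝ, τ ∈ Set.Ioc 0 R →
        (R < (m : ℝ) →
          (m : ℝ) * Real.tanh (τ / 2) ^ 2
            = 50 * Real.tanh (2 * R) ^ 2 *
                (Real.log m + Real.log (Real.log (Real.sinh (2 * R) / Real.sinh τ)))) →
        ((m : ℝ) ≤ R →
          Real.cosh (τ / 2) ^ 2 = (m : ℝ) * Real.log (Real.cosh (2 * R))) →
        |Real.log ((m : ℝ)⁻¹ ^ 4 *
              ((∫ η in (0:ℝ)..(2 * R), Real.sinh η ^ (m - 1)) /
                (∫ η in (0:ℝ)..τ, Real.sinh η ^ (m - 1))))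
            - (m : ℝ) * Real.log (Real.sqrt m * Real.cosh (2 * R))|
          ≤ ε * ((m : ℝ) * Real.log (Real.sqrt m * Real.cosh (2 * R))) := by
  intro ε hε
  obtain ⟨L₀, hL₀⟩ := eventually_atTop.1 (eventually_add_mul_log_le (log 64) 3 (half_pos hε))
  obtain ⟨m₀, hm₀⟩ := eventually_atTop.1 <| tendsto_natCast_atTop_atTop.eventually <|
    (eventually_ge_atTop (16 / ε)).and <| (eventually_add_mul_log_le 200 200 one_pos).and <|
      tendsto_log_atTop.eventually_ge_atTop (max L₀ 1 * 2)
  refine ⟨m₀, fun m hm R hR τ ⟨hτ, hτR⟩ h₁ h₂ => ?_⟩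
  obtain ⟨hmε, hm200, hlm⟩ := hm₀ m hm
  rw [div_le_iff₀ hε] at hmε
  rw [one_mul] at hm200
  have hlm₂ : 2 ≤ log (m : ℝ) := by linarith [le_max_right L₀ 1]
  have hm600 : (600 : ℝ) ≤ m := by linarith
  set L := log (√m * cosh (2 * R))
  have hL : L = log m / 2 + log (cosh (2 * R)) := log_sqrt_mul_cosh (by linarith) _
  have hlogC := log_nonneg (one_le_cosh (2 * R))
  have hL₀L : L₀ ≤ L := by linarith [le_max_left L₀ 1]
  have hSL := abs_log_sinh_div_sub_log_le (by linarith) hR hτ <| (lt_or_ge R m).elim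
    (fun h => gapRatio_mem_of_lt hm200 hlm₂ hτ hτR h (h₁ h))
    (fun h => gapRatio_mem_of_le (by linarith) h hτ (h₂ h))
  calc _ ≤ 4 * log m + log (cosh (2 * R)) + m * |log (sinh (2 * R) / sinh τ) - L| :=
        abs_log_integral_ratio_sub_le (by exact_mod_cast (show (1:ℝ) ≤ m by linarith)) hτ (by linarith)
    _ ≤ ε / 2 * (m * L) + m * (ε / 2 * L) := by
        refine add_le_add ?_ (mul_le_mul_of_nonneg_left (hSL.trans (hL₀ L hL₀L)) (by positivity))
        nlinarith [mul_nonneg (sub_nonneg.2 hmε) (show 0 ≤ L by linarith)]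
    _ = ε * (m * L) := by ring
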